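/- If x is a vertex of a tree G and C is a connected component of the subgraph of G induced on V \ {x} such that the total probability of the locations of an uncertain point P lying in C is strictly greater than 1/2, then every vertex m minimizing the expected distance D(m) = Σ_j f_j·dist(p_j, m) of P belongs to C. (Lemma 1, part 1: the median of P must lie in a split subtree of x whose probability sum exceeds 0.5.) -/

import Mathlib

/-!
Suppose a median `x₀` lies outside the heavy split subtree `C` of `x`. Stepping from `x₀` to its
neighbour `y` towards `C` brings every location in `C` one unit closer, because in a tree the
path from such a location to `x₀` runs through `y`, and moves every other location at most one
unit away. If `C` carries probability `w > 1/2`, the expected distance therefore drops by at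
least `w - (1 - w) > 0`, contradicting the minimality of `x₀`.
-/

open Finset

section ProbabilitySum

variable {ι V : Type*} [Fintype ι]

open Classical in
noncomputable def probSum (p : ι → V) (f : ι → ℝ) (S : Set V) : ℝ :=
  ∑ j, if p j ∈ S then f j else 0

lemma exists_apply_mem_of_probSum_ne_zero {p : ι → V} {f : ι → ℝ} {S : Set V}
    (h : probSum p f S ≠ 0) : ∃ j, p j ∈ S := by
  obtain ⟨j, -, hj⟩ := exists_ne_zero_of_sum_ne_zero h
  exact ⟨j, by_contra fun hj' => hj (if_neg hj')⟩

end ProbabilitySum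

namespace SimpleGraph

variable {V : Type*} {G : SimpleGraph V}

lemma IsAcyclic.length_eq_dist_of_isPath (hG : G.IsAcyclic) {u v : V} {p : G.Walk u v}
    (hp : p.IsPath) : p.length = G.dist u v := by
  obtain ⟨q, hq, hq_len⟩ := p.reachable.exists_path_of_dist
  rw [← hq_len,
    show p = q from congrArg Subtype.val ((hG.subsingleton_path u v).elim ⟨p, hp⟩ ⟨q, hq⟩)]

lemma IsAcyclic.dist_eq_dist_add_one_of_walk (hG : G.IsAcyclic) {c y x₀ : V}
    (hadj : G.Adj y x₀) (w : G.Walk c y) (hw : x₀ ∉ w.support) :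
    G.dist c x₀ = G.dist c y + 1 := by
  classical
  have hbypass : x₀ ∉ w.bypass.support := fun h => hw (w.support_bypass_subset_support h)
  rw [← hG.length_eq_dist_of_isPath (w.bypass_isPath.concat hbypass hadj),
    ← hG.length_eq_dist_of_isPath w.bypass_isPath, Walk.length_concat]

lemma IsTree.exists_adj_forall_dist_eq_dist_add_one (hG : G.IsTree) {S : Set V} {c₀ x₀ : V}
    (hc₀ : c₀ ∈ S) (hx₀ : x₀ ∉ S)
    (hS : ∀ c ∈ S, ∃ w : G.Walk c c₀, ∀ z ∈ w.support, z ∈ S) :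
    ∃ y, G.Adj y x₀ ∧ ∀ c ∈ S, G.dist c x₀ = G.dist c y + 1 := by
  obtain ⟨p, hp, -⟩ := (hG.connected x₀ c₀).exists_path_of_dist
  cases p with
  | nil => exact absurd hc₀ hx₀
  | cons hadj q =>
    refine ⟨_, hadj.symm, fun c hc => ?_⟩
    obtain ⟨w, hwS⟩ := hS c hc
    refine hG.isAcyclic.dist_eq_dist_add_one_of_walk hadj.symm (w.append q.reverse) ?_
    rw [Walk.mem_support_append_iff, Walk.support_reverse, List.mem_reverse, not_or]
    exact ⟨fun h => hx₀ (hwS _ h), ((Walk.cons_isPath_iff _ _).mp hp).2⟩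

lemma ConnectedComponent.exists_walk_forall_mem_image_supp {s : Set V}
    (C : (G.induce s).ConnectedComponent) {u v : V} (hu : u ∈ Subtype.val '' C.supp)
    (hv : v ∈ Subtype.val '' C.supp) :
    ∃ w : G.Walk u v, ∀ z ∈ w.support, z ∈ Subtype.val '' C.supp := by
  classical
  obtain ⟨u, hu, rfl⟩ := hu
  obtain ⟨v, hv, rfl⟩ := hv
  obtain ⟨w⟩ := C.reachable_of_mem_supp hu hv
  refine ⟨w.map (Embedding.induce s).toHom, fun z hz => ?_⟩
  obtain ⟨z', hz', rfl⟩ := List.mem_map.mp (w.support_map _ ▸ hz)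
  refine ⟨z', ?_, rfl⟩
  rw [ConnectedComponent.mem_supp_iff] at hu ⊢
  exact (ConnectedComponent.sound (w.takeUntil z' hz').reachable).symm.trans hu

section ExpectedDistance

variable {ι : Type*} [Fintype ι]

noncomputable def expectedDist (G : SimpleGraph V) (p : ι → V) (f : ι → ℝ) (v : V) : ℝ :=
  ∑ j, f j * (G.dist (p j) v : ℝ)

lemma expectedDist_add_two_mul_probSum_le (p : ι → V) {f : ι → ℝ} (hf : ∀ j, 0 ≤ f j)
    (hsum : ∑ j, f j = 1) {S : Set V} {x₀ y : V} (hadj : G.Adj y x₀)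
    (hS : ∀ c ∈ S, G.dist c x₀ = G.dist c y + 1) :
    G.expectedDist p f y + 2 * probSum p f S ≤ G.expectedDist p f x₀ + 1 := by
  classical
  have hterm : ∀ j ∈ univ, f j * (G.dist (p j) y : ℝ) + 2 * (if p j ∈ S then f j else 0)
      ≤ f j * (G.dist (p j) x₀ : ℝ) + f j := by
    intro j _
    by_cases hj : p j ∈ S
    · rw [if_pos hj, hS _ hj]
      push_cast
      linarith
    · have hstep : (G.dist (p j) y : ℝ) ≤ G.dist (p j) x₀ + 1 := by
        have := hadj.symm.diff_dist_adj (u := p j)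
        exact_mod_cast (by omega : G.dist (p j) y ≤ G.dist (p j) x₀ + 1)
      rw [if_neg hj]
      linarith [mul_le_mul_of_nonneg_left hstep (hf j)]
  have := sum_le_sum hterm
  rw [sum_add_distrib, sum_add_distrib, ← mul_sum, hsum] at this
  simpa only [expectedDist, probSum] using this

end ExpectedDistance

end SimpleGraph

open SimpleGraph

open Classical in
theorem median_in_heavy_split_subtree_general {V : Type*} (G : SimpleGraph V)
    (hT : G.IsTree) {m : ℕ} (p : Fin m → V) (f : Fin m → ℝ)
    (hf : ∀ j, 0 ≤ f j) (hsum : ∑ j, f j = 1) (x : V)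
    (C : (G.induce {v | v ≠ x}).ConnectedComponent)
    (hheavy : (1 : ℝ) / 2 < ∑ j, if p j ∈ Subtype.val '' C.supp then f j else 0) :
    ∀ x₀ : V, (∀ v : V, ∑ j, f j * (G.dist (p j) x₀ : ℝ) ≤ ∑ j, f j * (G.dist (p j) v : ℝ)) →
      x₀ ∈ Subtype.val '' C.supp := by
  intro x₀ hmin
  by_contra hx₀
  have hmass : 1 / 2 < probSum p f (Subtype.val '' C.supp) := hheavy
  obtain ⟨j₀, hj₀⟩ := exists_apply_mem_of_probSum_ne_zero (by linarith : probSum p f _ ≠ 0)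
  obtain ⟨y, hadj, hy⟩ := hT.exists_adj_forall_dist_eq_dist_add_one hj₀ hx₀
    fun c hc => C.exists_walk_forall_mem_image_supp hc hj₀
  have hdescent := expectedDist_add_two_mul_probSum_le p hf hsum hadj hy
  have hmin_y : G.expectedDist p f x₀ ≤ G.expectedDist p f y := hmin y
  linarith

open Classical in
/-- Lemma 1, part 1: if a split subtree `C` of `x` holds probability sum of the
uncertain point greater than `1/2`, then every median of the uncertain point
lies in `C`. -/
theorem median_in_heavy_split_subtree {V : Type*} [Fintype V] (G : SimpleGraph V)
    (hT : G.IsTree) {m : ℕ} (p : Fin m → V) (f : Fin m → ℝ)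
    (hf : ∀ j, 0 ≤ f j) (hsum : ∑ j, f j = 1) (x : V)
    (C : (G.induce {v | v ≠ x}).ConnectedComponent)
    (hheavy : (1 : ℝ) / 2 < ∑ j, if p j ∈ Subtype.val '' C.supp then f j else 0) :
    ∀ x₀ : V, (∀ v : V, ∑ j, f j * (G.dist (p j) x₀ : ℝ) ≤ ∑ j, f j * (G.dist (p j) v : ℝ)) →
      x₀ ∈ Subtype.val '' C.supp :=
  median_in_heavy_split_subtree_general G hT p f hf hsum x C hheavy
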